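/- The explicit map φ^{1,{2,3}} solves the 3×3 matrix re-factorization problem A¹(u)A^{2,3}(v) = A^{2,3}(y)A¹(x): for x = (x⁽¹⁾,…,x⁽⁶⁾), y = (y⁽¹⁾,…,y⁽⁶⁾) in D⁶ such that the elements v⁽²⁾ := y⁽²⁾+y⁽¹⁾x⁽²⁾, v⁽³⁾ := y⁽³⁾+y⁽¹⁾x⁽³⁾, v⁽⁵⁾ := y⁽⁵⁾+y⁽⁴⁾x⁽²⁾, v⁽⁶⁾ := y⁽⁶⁾+y⁽⁴⁾x⁽³⁾, v⁽³⁾(v⁽⁶⁾)⁻¹ − v⁽²⁾(v⁽⁵⁾)⁻¹ and v⁽⁵⁾(v⁽²⁾)⁻¹ − v⁽⁶⁾(v⁽³⁾)⁻¹ are all nonzero, setting v⁽¹⁾ = y⁽¹⁾x⁽¹⁾, v⁽⁴⁾ = y⁽⁴⁾x⁽¹⁾, u⁽²⁾ = (x⁽³⁾(v⁽⁶⁾)⁻¹ − x⁽²⁾(v⁽⁵⁾)⁻¹)(v⁽³⁾(v⁽⁶⁾)⁻¹ − v⁽²⁾(v⁽⁵⁾)⁻¹)⁻¹, u⁽³⁾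 = (x⁽²⁾(v⁽²⁾)⁻¹ − x⁽³⁾(v⁽³⁾)⁻¹)(v⁽⁵⁾(v⁽²⁾)⁻¹ − v⁽⁶⁾(v⁽³⁾)⁻¹)⁻¹, u⁽¹⁾ = x⁽¹⁾ − u⁽²⁾v⁽¹⁾ − u⁽³⁾v⁽⁴⁾ and u⁽ʲ⁾ = x⁽ʲ⁾ for j = 4,5,6, the matrix identity A¹(u)A^{2,3}(v) = A^{2,3}(y)A¹(x) holds. -/

import Mathlib

/-!
Only the first row of the identity is not automatic: it says that `(u⁽²⁾, u⁽³⁾)` solves the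
`2 × 2` system `u⁽²⁾v⁽²⁾ + u⁽³⁾v⁽⁵⁾ = x⁽²⁾`, `u⁽²⁾v⁽³⁾ + u⁽³⁾v⁽⁶⁾ = x⁽³⁾`. Right-dividing the two
equations by `v⁽⁵⁾, v⁽⁶⁾` (resp. `v⁽²⁾, v⁽³⁾`) and subtracting eliminates `u⁽³⁾` (resp. `u⁽²⁾`),
which is where the formulas for `u⁽²⁾` and `u⁽³⁾` come from. Conversely, `u⁽³⁾` together with
`w := (x⁽²⁾ - u⁽³⁾v⁽⁵⁾)(v⁽²⁾)⁻¹` solves the system, and eliminating `u⁽³⁾` from it shows `w = u⁽²⁾`.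
-/

variable {D : Type*} [DivisionRing D]

/-- The matrix `A¹(x)` for `x ∈ D⁶`: the identity with first row replaced by
`(x⁽¹⁾, x⁽²⁾, x⁽³⁾)` (the entries `x⁽⁴⁾, x⁽⁵⁾, x⁽⁶⁾` are unused). -/
def A1 (a1 a2 a3 a4 a5 a6 : D) : Matrix (Fin 3) (Fin 3) D :=
  !![a1, a2, a3; 0, 1, 0; 0, 0, 1]

/-- The matrix `A^{2,3}(x)` for `x ∈ D⁶`: the identity with second row replaced by
`(x⁽¹⁾, x⁽²⁾, x⁽³⁾)` and third row replaced by `(x⁽⁴⁾, x⁽⁵⁾, x⁽⁶⁾)`. -/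
def A23 (a1 a2 a3 a4 a5 a6 : D) : Matrix (Fin 3) (Fin 3) D :=
  !![1, 0, 0; a1, a2, a3; a4, a5, a6]

theorem mul_sub_eq_of_linear_system {p q a b c d s t : D} (hc : c ≠ 0) (hd : d ≠ 0)
    (hs : p * a + q * c = s) (ht : p * b + q * d = t) :
    p * (b * d⁻¹ - a * c⁻¹) = t * d⁻¹ - s * c⁻¹ := by
  rw [← hs, ← ht]
  simp only [mul_sub, add_mul, mul_assoc, mul_inv_cancel₀ hc, mul_inv_cancel₀ hd, mul_one]
  abel

theorem linear_system_of_mul_sub_eq {q a b c d s t : D} (hb : b ≠ 0)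
    (hq : q * (c * a⁻¹ - d * b⁻¹) = s * a⁻¹ - t * b⁻¹) :
    (s - q * c) * a⁻¹ * b + q * d = t := by
  have h := congrArg (· * b) hq
  simp only [mul_sub, sub_mul, mul_assoc, inv_mul_cancel₀ hb, mul_one] at h
  simp only [sub_mul, mul_assoc]
  linear_combination (norm := abel1) -h

theorem A1_mul_A23 (u1 u2 u3 u4 u5 u6 v1 v2 v3 v4 v5 v6 : D) :
    A1 u1 u2 u3 u4 u5 u6 * A23 v1 v2 v3 v4 v5 v6 =
      !![u1 + u2 * v1 + u3 * v4, u2 * v2 + u3 * v5, u2 * v3 + u3 * v6; v1, v2, v3; v4, v5, v6] := by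
  simp [A1, A23, add_assoc]

theorem A23_mul_A1 (y1 y2 y3 y4 y5 y6 x1 x2 x3 x4 x5 x6 : D) :
    A23 y1 y2 y3 y4 y5 y6 * A1 x1 x2 x3 x4 x5 x6 =
      !![x1, x2, x3; y1 * x1, y2 + y1 * x2, y3 + y1 * x3; y4 * x1, y5 + y4 * x2, y6 + y4 * x3] := by
  simp [A1, A23, add_comm]

/-- The explicit map `φ^{1,{2,3}}` solves the `3 × 3` matrix re-factorization problem
`A¹(u)A^{2,3}(v) = A^{2,3}(y)A¹(x)`. -/
theorem phi1_23_refactorization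
    (x1 x2 x3 x4 x5 x6 y1 y2 y3 y4 y5 y6 v1 v2 v3 v4 v5 v6 u1 u2 u3 : D)
    (hv1 : v1 = y1 * x1) (hv2 : v2 = y2 + y1 * x2) (hv3 : v3 = y3 + y1 * x3)
    (hv4 : v4 = y4 * x1) (hv5 : v5 = y5 + y4 * x2) (hv6 : v6 = y6 + y4 * x3)
    (h2 : v2 ≠ 0) (h3 : v3 ≠ 0) (h5 : v5 ≠ 0) (h6 : v6 ≠ 0)
    (hA : v3 * v6⁻¹ - v2 * v5⁻¹ ≠ 0) (hB : v5 * v2⁻¹ - v6 * v3⁻¹ ≠ 0)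
    (hu2 : u2 = (x3 * v6⁻¹ - x2 * v5⁻¹) * (v3 * v6⁻¹ - v2 * v5⁻¹)⁻¹)
    (hu3 : u3 = (x2 * v2⁻¹ - x3 * v3⁻¹) * (v5 * v2⁻¹ - v6 * v3⁻¹)⁻¹)
    (hu1 : u1 = x1 - u2 * v1 - u3 * v4) :
    A1 u1 u2 u3 x4 x5 x6 * A23 v1 v2 v3 v4 v5 v6 =
      A23 y1 y2 y3 y4 y5 y6 * A1 x1 x2 x3 x4 x5 x6 := by
  have hu3' : u3 * (v5 * v2⁻¹ - v6 * v3⁻¹) = x2 * v2⁻¹ - x3 * v3⁻¹ := by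
    rw [hu3, inv_mul_cancel_right₀ hB]
  set w := (x2 - u3 * v5) * v2⁻¹ with hw
  have e2w : w * v2 + u3 * v5 = x2 := by rw [hw, inv_mul_cancel_right₀ h2, sub_add_cancel]
  have e3w : w * v3 + u3 * v6 = x3 := linear_system_of_mul_sub_eq h3 hu3'
  have hwu : w = u2 := mul_right_cancel₀ hA <| by
    rw [mul_sub_eq_of_linear_system h5 h6 e2w e3w, hu2, inv_mul_cancel_right₀ hA]
  have e1 : u1 + u2 * v1 + u3 * v4 = x1 := by rw [hu1]; abel
  rw [A1_mul_A23, A23_mul_A1, ← hv1, ← hv2, ← hv3, ← hv4, ← hv5, ← hv6, e1, ← hwu, e2w, e3w]
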